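/- arXiv:physics/0703192 — 6 statements merged into one kernel-verified Lean document; each statement's English description precedes it below -/
import Mathlib

section
/- Let ε > 0, μ > 0 and x₀ ∈ ℝ. Then the function η(ξ) = −(7/(4ε)) · sech²((√7/(2μ))·(ξ + x₀)) satisfies the ordinary differential equation 7·η′(ξ) − μ²·η‴(ξ) = −12ε·η(ξ)·η′(ξ) for all ξ ∈ ℝ. -/
/-- For `ε > 0`, `μ > 0`, `x₀ ∈ ℝ`, the function
`η ξ = −(7/(4ε)) · sech²((√7/(2μ))·(ξ + x₀))` (with `sech x = 1 / cosh x`)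
satisfies `7·η′ − μ²·η‴ = −12ε·η·η′` on all of `ℝ`. -/
theorem solitary_wave_profile (ε μ x₀ : ℝ) (hε : ε > 0) (hμ : μ > 0)
    (η : ℝ → ℝ)
    (hη : ∀ ξ : ℝ,
      η ξ = -(7 / (4 * ε)) *
        (1 / Real.cosh (Real.sqrt 7 / (2 * μ) * (ξ + x₀)))^2) :
    ∀ ξ : ℝ, 7 * deriv η ξ - μ^2 * deriv^[3] η ξ = -(12 * ε) * (η ξ * deriv η ξ) := by
  have hε' : ε ≠ 0 := hε.ne'
  have hμ' : μ ≠ 0 := hμ.ne'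
  set k : ℝ := Real.sqrt 7 / (2 * μ) with hk
  set A : ℝ := -(7 / (4 * ε)) with hA
  have h7 : Real.sqrt 7 ^ 2 = 7 := Real.sq_sqrt (by norm_num)
  have hk2 : k ^ 2 = 7 / (4 * μ ^ 2) := by rw [hk, div_pow, h7]; ring
  have hk3 : k ^ 3 = k * (7 / (4 * μ ^ 2)) := by
    rw [show k ^ 3 = k * k ^ 2 by ring, hk2]
  have hc : ∀ ξ : ℝ, Real.cosh (k * (ξ + x₀)) ≠ 0 := fun ξ => (Real.cosh_pos _).ne'
  have hηf : η = fun ξ => A / (Real.cosh (k * (ξ + x₀))) ^ 2 := by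
    funext ξ; rw [hη ξ]; ring
  have hu : ∀ ξ : ℝ, HasDerivAt (fun ξ : ℝ => k * (ξ + x₀)) k ξ := fun ξ => by
    simpa using ((hasDerivAt_id ξ).add_const x₀).const_mul k
  have hcosh : ∀ ξ : ℝ, HasDerivAt (fun ξ : ℝ => Real.cosh (k * (ξ + x₀)))
      (Real.sinh (k * (ξ + x₀)) * k) ξ := fun ξ =>
    (Real.hasDerivAt_cosh _).comp ξ (hu ξ)
  have hsinh : ∀ ξ : ℝ, HasDerivAt (fun ξ : ℝ => Real.sinh (k * (ξ + x₀)))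
      (Real.cosh (k * (ξ + x₀)) * k) ξ := fun ξ =>
    (Real.hasDerivAt_sinh _).comp ξ (hu ξ)
  -- first derivative
  have hD1 : ∀ ξ : ℝ, HasDerivAt η
      ((-2 * A * k) * Real.sinh (k * (ξ + x₀)) / (Real.cosh (k * (ξ + x₀))) ^ 3) ξ := by
    intro ξ
    rw [hηf]
    have h := (hasDerivAt_const ξ A).div ((hcosh ξ).pow 2)
      (pow_ne_zero 2 (hc ξ))
    refine h.congr_deriv ?_
    have := hc ξ
    simp only [Pi.pow_apply]
    field_simp
    ring
  have e1 : deriv η = fun ξ =>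
      (-2 * A * k) * Real.sinh (k * (ξ + x₀)) / (Real.cosh (k * (ξ + x₀))) ^ 3 :=
    funext fun ξ => (hD1 ξ).deriv
  -- second derivative
  have hD2 : ∀ ξ : ℝ, HasDerivAt (deriv η)
      ((-2 * A * k ^ 2) * ((Real.cosh (k * (ξ + x₀))) ^ 2 - 3 * (Real.sinh (k * (ξ + x₀))) ^ 2)
        / (Real.cosh (k * (ξ + x₀))) ^ 4) ξ := by
    intro ξ
    rw [e1]
    have h := ((hsinh ξ).const_mul (-2 * A * k)).div ((hcosh ξ).pow 3)
      (pow_ne_zero 3 (hc ξ))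
    refine h.congr_deriv ?_
    have := hc ξ
    simp only [Pi.pow_apply]
    field_simp
    ring
  have e2 : deriv (deriv η) = fun ξ =>
      (-2 * A * k ^ 2) * ((Real.cosh (k * (ξ + x₀))) ^ 2 - 3 * (Real.sinh (k * (ξ + x₀))) ^ 2)
        / (Real.cosh (k * (ξ + x₀))) ^ 4 :=
    funext fun ξ => (hD2 ξ).deriv
  -- third derivative
  have hD3 : ∀ ξ : ℝ, HasDerivAt (deriv (deriv η))
      ((-2 * A * k ^ 3) * Real.sinh (k * (ξ + x₀)) *
        (-8 * (Real.cosh (k * (ξ + x₀))) ^ 2 + 12 * (Real.sinh (k * (ξ + x₀))) ^ 2)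
        / (Real.cosh (k * (ξ + x₀))) ^ 5) ξ := by
    intro ξ
    rw [e2]
    have hnum : HasDerivAt (fun ξ : ℝ =>
        (-2 * A * k ^ 2) * ((Real.cosh (k * (ξ + x₀))) ^ 2 - 3 * (Real.sinh (k * (ξ + x₀))) ^ 2))
        ((-2 * A * k ^ 2) * (2 * Real.cosh (k * (ξ + x₀)) ^ 1 * (Real.sinh (k * (ξ + x₀)) * k)
          - 3 * (2 * Real.sinh (k * (ξ + x₀)) ^ 1 * (Real.cosh (k * (ξ + x₀)) * k)))) ξ :=
      (((hcosh ξ).pow 2).sub (((hsinh ξ).pow 2).const_mul 3)).const_mul (-2 * A * k ^ 2)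
    have h := hnum.div ((hcosh ξ).pow 4) (pow_ne_zero 4 (hc ξ))
    refine h.congr_deriv ?_
    have := hc ξ
    simp only [Pi.pow_apply]
    field_simp
    ring
  have e3 : deriv^[3] η = fun ξ =>
      (-2 * A * k ^ 3) * Real.sinh (k * (ξ + x₀)) *
        (-8 * (Real.cosh (k * (ξ + x₀))) ^ 2 + 12 * (Real.sinh (k * (ξ + x₀))) ^ 2)
        / (Real.cosh (k * (ξ + x₀))) ^ 5 := by
    show deriv (deriv (deriv η)) = _
    exact funext fun ξ => (hD3 ξ).deriv
  intro ξ
  rw [e1, e3, hηf]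
  simp only
  have hs2 : Real.sinh (k * (ξ + x₀)) ^ 2 = Real.cosh (k * (ξ + x₀)) ^ 2 - 1 := by
    have := Real.cosh_sq_sub_sinh_sq (k * (ξ + x₀)); linarith
  rw [hk3, hA, hs2]
  have := hc ξ
  field_simp
  ring
end

section
/- Let ε > 0, μ > 0, x₀ ∈ ℝ, and set B = 6/√15 and c = 1/√15. Define η(x,t) = −(7/(4ε))·sech²((√7/(2μ))·(x + c·t + x₀)) and u(x,t) = B·η(x,t). Then (η, u) is an exact solution of the non-dissipative (1+1)-dimensional Boussinesq system over a flat bottom: ∂η/∂t + ∂u/∂x + ε·∂(u·η)/∂x − (μ²/6)·∂³u/∂x³ = 0 and ∂u/∂t + ∂η/∂x + ε·u·∂u/∂x − (μ²/2)·∂³u/∂x²∂t = 0, for all (x,t) ∈ ℝ². -/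
noncomputable def bS (y : ℝ) : ℝ := (1 / Real.cosh y)^2
noncomputable def bS1 (y : ℝ) : ℝ := -2 * Real.sinh y / (Real.cosh y)^3
noncomputable def bS2 (y : ℝ) : ℝ := 4 * bS y - 6 * (bS y)^2
noncomputable def bS3 (y : ℝ) : ℝ := (4 - 12 * bS y) * bS1 y
noncomputable def bP (y : ℝ) : ℝ := (bS y)^2
noncomputable def bP1 (y : ℝ) : ℝ := 2 * bS y * bS1 y

lemma hbS (y : ℝ) : HasDerivAt bS (bS1 y) y := by
  have h := ((Real.hasDerivAt_cosh y).inv (Real.cosh_pos y).ne').pow 2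
  have he : bS = fun z => ((Real.cosh z)⁻¹)^2 := by funext z; simp [bS, one_div]
  rw [he]
  refine h.congr_deriv ?_; symm
  have := (Real.cosh_pos y).ne'
  rw [bS1]
  push_cast
  field_simp
  rw [Pi.inv_apply, mul_inv_cancel_right₀ this]

lemma hbS1 (y : ℝ) : HasDerivAt bS1 (bS2 y) y := by
  have hnum : HasDerivAt (fun z => -2 * Real.sinh z) (-2 * Real.cosh y) y :=
    (Real.hasDerivAt_sinh y).const_mul (-2)
  have hden : HasDerivAt (fun z => (Real.cosh z)^3) (3 * (Real.cosh y)^2 * Real.sinh y) y := by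
    exact ((Real.hasDerivAt_cosh y).pow 3).congr_deriv (by norm_num)
  have h := hnum.div hden (by positivity)
  refine h.congr_deriv ?_; symm
  have := (Real.cosh_pos y).ne'
  rw [bS2, bS]
  field_simp
  linear_combination (-6) * Real.sinh_sq y

lemma hbS2 (y : ℝ) : HasDerivAt bS2 (bS3 y) y := by
  have h := (((hbS y).const_mul 4)).sub (((hbS y).pow 2).const_mul 6)
  have he : bS2 = fun z => 4 * bS z - 6 * (bS z)^2 := rfl
  rw [he]
  refine h.congr_deriv ?_; symm
  rw [bS3, bS1]; push_cast; ring

lemma hbP (y : ℝ) : HasDerivAt bP (bP1 y) y := by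
  have h := (hbS y).pow 2
  have he : bP = fun z => (bS z)^2 := rfl
  rw [he]
  refine h.congr_deriv ?_; symm
  rw [bP1]; push_cast; ring



/-- With `B = 6/√15`, `c = 1/√15`,
`η(x,t) = −(7/(4ε))·sech²((√7/(2μ))·(x + c·t + x₀))` and `u = B·η`,
the pair `(η, u)` solves the non-dissipative (1+1)D Boussinesq system over a
flat bottom:
`η_t + u_x + ε(uη)_x − (μ²/6)u_xxx = 0` and
`u_t + η_x + ε u u_x − (μ²/2)u_xxt = 0` for all `(x,t) ∈ ℝ²`. -/
theorem boussinesq_exact_solitary_wave (ε μ x₀ : ℝ) (hε : ε > 0) (hμ : μ > 0)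
    (B c : ℝ) (hB : B = 6 / Real.sqrt 15) (hc : c = 1 / Real.sqrt 15)
    (η u : ℝ → ℝ → ℝ)
    (hη : ∀ x t : ℝ,
      η x t = -(7 / (4 * ε)) *
        (1 / Real.cosh (Real.sqrt 7 / (2 * μ) * (x + c * t + x₀)))^2)
    (hu : ∀ x t : ℝ, u x t = B * η x t) :
    ∀ x t : ℝ,
      (deriv (fun t' => η x t') t + deriv (fun x' => u x' t) x
        + ε * deriv (fun x' => u x' t * η x' t) x
        - μ^2 / 6 * deriv^[3] (fun x' => u x' t) x = 0)
      ∧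
      (deriv (fun t' => u x t') t + deriv (fun x' => η x' t) x
        + ε * u x t * deriv (fun x' => u x' t) x
        - μ^2 / 2 * deriv (fun t' => deriv^[2] (fun x' => u x' t') x) t = 0) := by
  intro x t
  have hμ' : μ ≠ 0 := hμ.ne'
  have hε' : ε ≠ 0 := hε.ne'
  set K : ℝ := Real.sqrt 7 / (2*μ) with hK
  set A : ℝ := -(7/(4*ε)) with hA
  have hηe : ∀ x' t' : ℝ, η x' t' = A * bS (K*(x' + c*t' + x₀)) := by
    intro x' t'; rw [hη]; rfl
  have hue : ∀ x' t' : ℝ, u x' t' = (B*A) * bS (K*(x' + c*t' + x₀)) := by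
    intro x' t'; rw [hu, hηe]; ring
  have hθx : ∀ (t' x' : ℝ), HasDerivAt (fun x'' => K*(x'' + c*t' + x₀)) K x' := by
    intro t' x'
    simpa using (((hasDerivAt_id x').add_const (c*t')).add_const x₀).const_mul K
  have hθt : ∀ (x' t' : ℝ), HasDerivAt (fun t'' => K*(x' + c*t'' + x₀)) (K*c) t' := by
    intro x' t'
    have h1 : HasDerivAt (fun t'' : ℝ => x' + c*t'' + x₀) c t' := by
      simpa using (((hasDerivAt_id t').const_mul c).const_add x').add_const x₀
    simpa using h1.const_mul K
  have gen : ∀ (f f' : ℝ → ℝ), (∀ y, HasDerivAt f (f' y) y) → ∀ (C t' x' : ℝ),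
      HasDerivAt (fun x'' => C * f (K*(x'' + c*t' + x₀)))
        (C * K * f' (K*(x' + c*t' + x₀))) x' := by
    intro f f' hf C t' x'
    have h := ((hf _).comp x' (hθx t' x')).const_mul C
    refine h.congr_deriv ?_; symm
    ring
  have genT : ∀ (f f' : ℝ → ℝ), (∀ y, HasDerivAt f (f' y) y) → ∀ (C x' t' : ℝ),
      HasDerivAt (fun t'' => C * f (K*(x' + c*t'' + x₀)))
        (C * (K*c) * f' (K*(x' + c*t' + x₀))) t' := by
    intro f f' hf C x' t'
    have h := ((hf _).comp t' (hθt x' t')).const_mul C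
    refine h.congr_deriv ?_; symm
    ring
  -- the individual derivative computations
  have e_ηt : deriv (fun t' => η x t') t = A * (K*c) * bS1 (K*(x + c*t + x₀)) := by
    have he : (fun t' => η x t') = fun t' => A * bS (K*(x + c*t' + x₀)) :=
      funext fun t' => hηe x t'
    rw [he, (genT bS bS1 hbS A x t).deriv]
  have e_ut : deriv (fun t' => u x t') t = (B*A) * (K*c) * bS1 (K*(x + c*t + x₀)) := by
    have he : (fun t' => u x t') = fun t' => (B*A) * bS (K*(x + c*t' + x₀)) :=
      funext fun t' => hue x t'
    rw [he, (genT bS bS1 hbS (B*A) x t).deriv]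
  have e_ηx : deriv (fun x' => η x' t) x = A * K * bS1 (K*(x + c*t + x₀)) := by
    have he : (fun x' => η x' t) = fun x' => A * bS (K*(x' + c*t + x₀)) :=
      funext fun x' => hηe x' t
    rw [he, (gen bS bS1 hbS A t x).deriv]
  have e_ux_fun : ∀ t', deriv (fun x' => u x' t')
      = fun x' => (B*A) * K * bS1 (K*(x' + c*t' + x₀)) := by
    intro t'
    have he : (fun x' => u x' t') = fun x' => (B*A) * bS (K*(x' + c*t' + x₀)) :=
      funext fun x' => hue x' t'
    rw [he]
    exact funext fun x' => (gen bS bS1 hbS (B*A) t' x').deriv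
  have e_ux2_fun : ∀ t', deriv (deriv (fun x' => u x' t'))
      = fun x' => (B*A) * K * K * bS2 (K*(x' + c*t' + x₀)) := by
    intro t'
    rw [e_ux_fun t']
    exact funext fun x' => (gen bS1 bS2 hbS1 ((B*A)*K) t' x').deriv
  have e_ux3 : deriv (deriv (deriv (fun x' => u x' t))) x
      = (B*A) * K * K * K * bS3 (K*(x + c*t + x₀)) := by
    rw [e_ux2_fun t]
    exact (gen bS2 bS3 hbS2 ((B*A)*K*K) t x).deriv
  have e_prod : deriv (fun x' => u x' t * η x' t) x
      = (B*A*A) * K * bP1 (K*(x + c*t + x₀)) := by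
    have he : (fun x' => u x' t * η x' t) = fun x' => (B*A*A) * bP (K*(x' + c*t + x₀)) := by
      funext x'; rw [hue, hηe, bP]; ring
    rw [he, (gen bP bP1 hbP (B*A*A) t x).deriv]
  have e_mix : deriv (fun t' => deriv (deriv (fun x' => u x' t')) x) t
      = (B*A*K*K) * (K*c) * bS3 (K*(x + c*t + x₀)) := by
    have he : (fun t' => deriv (deriv (fun x' => u x' t')) x)
        = fun t' => (B*A*K*K) * bS2 (K*(x + c*t' + x₀)) := by
      funext t'; rw [e_ux2_fun t']
    rw [he, (genT bS2 bS3 hbS2 (B*A*K*K) x t).deriv]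
  simp only [Function.iterate_succ_apply', Function.iterate_zero_apply]
  constructor
  · rw [e_ηt, congrFun (e_ux_fun t) x, e_prod, e_ux3, bS3, bP1]
    set s := bS (K*(x + c*t + x₀)) with hs
    set p := bS1 (K*(x + c*t + x₀)) with hp
    rw [hK, hA, hB, hc]
    have h7 : Real.sqrt 7 ^ 2 = 7 := Real.sq_sqrt (by norm_num)
    have h15 : Real.sqrt 15 ^ 2 = 15 := Real.sq_sqrt (by norm_num)
    have h15' : Real.sqrt 15 ≠ 0 := by positivity
    field_simp
    ring_nf
    have e73 : Real.sqrt 7 ^ 3 = 7 * Real.sqrt 7 := by rw [pow_succ, h7]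
    rw [e73]
    ring

  · rw [e_ut, e_ηx, congrFun (e_ux_fun t) x, e_mix, hue, bS3]
    set s := bS (K*(x + c*t + x₀)) with hs
    set p := bS1 (K*(x + c*t + x₀)) with hp
    rw [hK, hA, hB, hc]
    have h7 : Real.sqrt 7 ^ 2 = 7 := Real.sq_sqrt (by norm_num)
    have h15 : Real.sqrt 15 ^ 2 = 15 := Real.sq_sqrt (by norm_num)
    have h15' : Real.sqrt 15 ≠ 0 := by positivity
    field_simp
    ring_nf
    have e73 : Real.sqrt 7 ^ 3 = 7 * Real.sqrt 7 := by rw [pow_succ, h7]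
    have e154 : Real.sqrt 15 ^ 4 = 225 := by
      rw [show (4:ℕ) = 2*2 from rfl, pow_mul, h15]; norm_num
    have e156 : Real.sqrt 15 ^ 6 = 3375 := by
      rw [show (6:ℕ) = 2*3 from rfl, pow_mul, h15]; norm_num
    rw [e73, h15]
    ring
end

section
/- Let a ≥ 0 and b ≥ 0 be real numbers. Then every complex root ω of the quadratic equation ω² + i·b·ω − a = 0 satisfies Im(ω) ≤ 0. -/
/-! Multiplying the equation by `conj ω` and taking imaginary parts gives
`Im ω · (|ω|² + a) = -b · |ω|²`; the right side is `≤ 0` and `|ω|² + a ≥ 0`,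
vanishing only at `ω = 0`. -/

open Complex

theorem Complex.im_mul_normSq_add_eq_of_sq_add_I_mul_sub_eq_zero {a b : ℝ} {ω : ℂ}
    (h : ω ^ 2 + I * b * ω - a = 0) : ω.im * (normSq ω + a) = -(b * normSq ω) := by
  obtain ⟨hre, him⟩ := Complex.ext_iff.mp h
  simp only [sub_re, add_re, sub_im, add_im, mul_re, mul_im, pow_two, I_re, I_im, ofReal_re,
    ofReal_im, zero_re, zero_im] at hre him
  rw [normSq_apply]
  linear_combination ω.re * him - ω.im * hre

theorem Complex.im_nonpos_of_im_mul_normSq_add_eq {a b : ℝ} (ha : 0 ≤ a) (hb : 0 ≤ b) {ω : ℂ}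
    (h : ω.im * (normSq ω + a) = -(b * normSq ω)) : ω.im ≤ 0 := by
  by_contra! hpos
  have hnormSq : 0 < normSq ω := by
    rw [normSq_apply]
    nlinarith [mul_self_nonneg ω.re]
  nlinarith [mul_pos hpos hnormSq, mul_nonneg hpos.le ha, mul_nonneg hb hnormSq.le]

open Complex in
/-- for `a ≥ 0`, `b ≥ 0`, every complex root of
`ω² + i·b·ω − a = 0` has nonpositive imaginary part (no exponentially
growing wavelength). -/
theorem dissipative_dispersion_stability (a b : ℝ) (ha : a ≥ 0) (hb : b ≥ 0)
    (ω : ℂ) (hroot : ω^2 + I * (b : ℂ) * ω - (a : ℂ) = 0) :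
    ω.im ≤ 0 :=
  im_nonpos_of_im_mul_normSq_add_eq ha hb (im_mul_normSq_add_eq_of_sq_add_I_mul_sub_eq_zero hroot)
end

section
/- Let g > 0, h > 0, δ₁ ∈ ℝ, k ∈ ℝ with k ≠ 0, and ω ∈ ℂ. There exists a pair (η₀, u₀) ∈ ℂ² with (η₀, u₀) ≠ (0,0) satisfying the linear system (−iω)·η₀ + i·k·h·(1 + (k·h)²/6)·u₀ = 0 and g·i·k·η₀ + (−iω + δ₁ + (δ₁/2)·(k·h)² − (iω/2)·(k·h)²)·u₀ = 0 if and only if ω² + i·ω·δ₁ − g·h·k²·(1 + (k·h)²/6)/(1 + (k·h)²/2) = 0. -/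
/-!
A homogeneous `2 × 2` linear system has a nontrivial solution iff its determinant vanishes.
Here the determinant is `-(1 + (kh)²/2)` times the left-hand side of the dispersion relation,
and that factor never vanishes.
-/

theorem exists_ne_zero_linear_system_iff_det_eq_zero {K : Type*} [Field K] (a b c d : K) :
    (∃ x y : K, (x, y) ≠ (0, 0) ∧ a * x + b * y = 0 ∧ c * x + d * y = 0) ↔
      a * d - b * c = 0 := by
  rw [← Matrix.det_fin_two_of, ← Matrix.exists_mulVec_eq_zero_iff]
  constructor
  · rintro ⟨x, y, hxy, h₁, h₂⟩
    refine ⟨![x, y], fun h ↦ hxy ?_, ?_⟩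
    · simpa using ⟨congr_fun h 0, congr_fun h 1⟩
    · ext i; fin_cases i <;> simp [Matrix.mulVec, dotProduct, h₁, h₂]
  · rintro ⟨v, hv, hMv⟩
    refine ⟨v 0, v 1, fun h ↦ hv ?_, ?_, ?_⟩
    · ext i; fin_cases i <;> simp_all
    · simpa [Matrix.mulVec, dotProduct] using congr_fun hMv 0
    · simpa [Matrix.mulVec, dotProduct] using congr_fun hMv 1

open Complex in
theorem boussinesq_model_I_det_eq (g h δ₁ k : ℝ) (ω : ℂ) :
    (-(I * ω)) * (-(I * ω) + (δ₁ : ℂ) + ((δ₁ / 2 : ℝ) : ℂ) * ((k * h : ℝ) : ℂ)^2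
        - (I * ω / 2) * ((k * h : ℝ) : ℂ)^2)
      - I * (k : ℂ) * (h : ℂ) * ((1 : ℂ) + ((k * h : ℝ) : ℂ)^2 / 6) * ((g : ℂ) * I * (k : ℂ))
    = -((1 + (k * h)^2 / 2 : ℝ) : ℂ) * (ω^2 + I * ω * (δ₁ : ℂ)
      - ((g * h * k^2 * ((1 + (k * h)^2 / 6) / (1 + (k * h)^2 / 2)) : ℝ) : ℂ)) := by
  have hcancel : (1 + (k * h)^2 / 2) * (g * h * k^2 * ((1 + (k * h)^2 / 6) / (1 + (k * h)^2 / 2)))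
      = g * h * k^2 * (1 + (k * h)^2 / 6) := by
    have : 1 + (k * h)^2 / 2 ≠ 0 := by positivity
    field_simp
  have hcancelℂ := congrArg ((↑) : ℝ → ℂ) hcancel
  push_cast at hcancelℂ ⊢
  linear_combination (1 + (k * h : ℂ)^2 / 2) * ω^2 * I_sq - hcancelℂ
    - g * h * k^2 * (1 + (k * h : ℂ)^2 / 6) * I_sq

open Complex in
theorem boussinesq_dispersion_model_I_general (g h δ₁ k : ℝ)
    (ω : ℂ) :
    (∃ η₀ u₀ : ℂ, (η₀, u₀) ≠ (0, 0) ∧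
      (-(I * ω)) * η₀
        + I * (k : ℂ) * (h : ℂ) * ((1 : ℂ) + ((k * h : ℝ) : ℂ)^2 / 6) * u₀ = 0 ∧
      (g : ℂ) * I * (k : ℂ) * η₀
        + (-(I * ω) + (δ₁ : ℂ) + ((δ₁ / 2 : ℝ) : ℂ) * ((k * h : ℝ) : ℂ)^2
            - (I * ω / 2) * ((k * h : ℝ) : ℂ)^2) * u₀ = 0)
    ↔
    ω^2 + I * ω * (δ₁ : ℂ)
      - ((g * h * k^2 * ((1 + (k * h)^2 / 6) / (1 + (k * h)^2 / 2)) : ℝ) : ℂ) = 0 := by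
  have hfactor : ((1 + (k * h)^2 / 2 : ℝ) : ℂ) ≠ 0 := ofReal_ne_zero.mpr (by positivity)
  rw [exists_ne_zero_linear_system_iff_det_eq_zero, boussinesq_model_I_det_eq, mul_eq_zero,
    neg_eq_zero, or_iff_right hfactor]

open Complex in
/-- the plane-wave linear system for the Boussinesq equations with
dissipation model I has a nontrivial solution `(η₀, u₀) ≠ (0,0)` iff the
dispersion relation `ω² + iωδ₁ − ghk²(1+(kh)²/6)/(1+(kh)²/2) = 0` holds. -/
theorem boussinesq_dispersion_model_I (g h δ₁ k : ℝ)
    (hg : g > 0) (hh : h > 0) (hk : k ≠ 0) (ω : ℂ) :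
    (∃ η₀ u₀ : ℂ, (η₀, u₀) ≠ (0, 0) ∧
      (-(I * ω)) * η₀
        + I * (k : ℂ) * (h : ℂ) * ((1 : ℂ) + ((k * h : ℝ) : ℂ)^2 / 6) * u₀ = 0 ∧
      (g : ℂ) * I * (k : ℂ) * η₀
        + (-(I * ω) + (δ₁ : ℂ) + ((δ₁ / 2 : ℝ) : ℂ) * ((k * h : ℝ) : ℂ)^2
            - (I * ω / 2) * ((k * h : ℝ) : ℂ)^2) * u₀ = 0)
    ↔
    ω^2 + I * ω * (δ₁ : ℂ)
      - ((g * h * k^2 * ((1 + (k * h)^2 / 6) / (1 + (k * h)^2 / 2)) : ℝ) : ℂ) = 0 :=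
  boussinesq_dispersion_model_I_general g h δ₁ k ω
end

section
/- Let α ∈ ℝ. Define f(x) = (1 − (α²/2 − α + 1/3)·x²)/(1 − α·(α/2 − 1)·x²). Then as x → 0, f(x) = 1 − (1/3)·x² + (α·(2−α)/6)·x⁴ + O(x⁶); that is, there exist constants C > 0 and r > 0 such that |f(x) − (1 − x²/3 + α(2−α)x⁴/6)| ≤ C·|x|⁶ for all real x with 0 < |x| < r. -/
/-- Taylor expansion near `x = 0` of the squared nondimensional
Boussinesq phase velocity
`f(x) = (1 − (α²/2 − α + 1/3)x²)/(1 − α(α/2 − 1)x²)`: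
`f(x) = 1 − x²/3 + (α(2−α)/6)x⁴ + O(x⁶)`. -/
theorem boussinesq_phase_velocity_expansion (α : ℝ)
    (f : ℝ → ℝ)
    (hf : ∀ x : ℝ,
      f x = (1 - (α^2 / 2 - α + 1/3) * x^2) / (1 - α * (α / 2 - 1) * x^2)) :
    ∃ C > (0 : ℝ), ∃ r > (0 : ℝ), ∀ x : ℝ, 0 < |x| → |x| < r →
      |f x - (1 - x^2 / 3 + α * (2 - α) * x^4 / 6)| ≤ C * |x|^6 := by
  obtain ⟨a, ha⟩ : ∃ a : ℝ, a = α * (α / 2 - 1) := ⟨_, rfl⟩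
  refine ⟨2 * a ^ 2 / 3 + 1, by positivity, min 1 (1 / (2 * (|a| + 1))),
    lt_min one_pos (by positivity), ?_⟩
  intro x _ hxr
  have habs : 0 ≤ |a| := abs_nonneg a
  have hx1 : |x| ≤ 1 := le_of_lt (lt_of_lt_of_le hxr (min_le_left _ _))
  have hx2 : |x| ≤ 1 / (2 * (|a| + 1)) := le_of_lt (lt_of_lt_of_le hxr (min_le_right _ _))
  have hx2' : |x| * (2 * (|a| + 1)) ≤ 1 := by
    rw [le_div_iff₀ (by positivity)] at hx2
    linarith
  have hxx : x ^ 2 ≤ |x| := by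
    nlinarith [sq_abs x, abs_nonneg x]
  have hax : |a| * x ^ 2 ≤ 1 / 2 := by
    nlinarith [sq_abs x, abs_nonneg x, sq_nonneg x]
  have haax : a * x ^ 2 ≤ 1 / 2 := le_trans (le_trans (le_abs_self _)
    (by rw [abs_mul, abs_of_nonneg (sq_nonneg x)])) hax
  have hD : (1 : ℝ) / 2 ≤ 1 - a * x ^ 2 := by linarith
  have hDpos : (0 : ℝ) < 1 - a * x ^ 2 := by linarith
  have key : f x - (1 - x ^ 2 / 3 + α * (2 - α) * x ^ 4 / 6)
      = (-(a ^ 2) / 3 * x ^ 6) / (1 - a * x ^ 2) := by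
    rw [hf x, ← ha]
    rw [eq_div_iff hDpos.ne', sub_mul, div_mul_cancel₀ _ hDpos.ne']
    rw [ha]
    ring
  rw [key, abs_div, abs_of_pos hDpos]
  have hnum : |(-(a ^ 2) / 3 * x ^ 6)| = a ^ 2 / 3 * |x| ^ 6 := by
    rw [abs_mul, abs_pow, abs_div]
    simp [abs_of_nonneg (sq_nonneg a)]
  rw [hnum]
  calc a ^ 2 / 3 * |x| ^ 6 / (1 - a * x ^ 2)
      ≤ a ^ 2 / 3 * |x| ^ 6 / (1 / 2) :=
        div_le_div_of_nonneg_left (by positivity) (by norm_num) hD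
    _ = 2 * a ^ 2 / 3 * |x| ^ 6 := by ring
    _ ≤ (2 * a ^ 2 / 3 + 1) * |x| ^ 6 := by nlinarith [pow_nonneg (abs_nonneg x) 6]
end

section
/- Let α = 1 − 1/√5 and define f(x) = (1 − (α²/2 − α + 1/3)·x²)/(1 − α·(α/2 − 1)·x²). Then as x → 0, f(x) − tanh(x)/x = O(x⁶); that is, there exist constants C > 0 and r > 0 such that |f(x) − tanh(x)/x| ≤ C·|x|⁶ for all real x with 0 < |x| < r. -/
lemma exp_trunc7 (x : ℝ) :
    ∑ m ∈ Finset.range 7, x ^ m / m.factorial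
      = 1 + x + x^2/2 + x^3/6 + x^4/24 + x^5/120 + x^6/720 := by
  norm_num [Finset.sum_range_succ, Nat.factorial]

lemma cosh_taylor (x : ℝ) (hx : |x| ≤ 1) :
    |Real.cosh x - (1 + x^2/2 + x^4/24 + x^6/720)| ≤ |x|^7 / 4410 := by
  have h1 := Real.exp_bound hx (by norm_num : 0 < 7)
  have h2 := Real.exp_bound (x := -x) (by rwa [abs_neg]) (by norm_num : 0 < 7)
  rw [exp_trunc7] at h1 h2
  rw [abs_neg] at h2
  have hfac : ((Nat.succ 7 : ℕ) : ℝ) / ((Nat.factorial 7 : ℕ) * (7:ℕ)) = 1/4410 := by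
    norm_num [Nat.factorial]
  rw [hfac] at h1 h2
  have hc : Real.cosh x - (1 + x^2/2 + x^4/24 + x^6/720)
      = ((Real.exp x - (1 + x + x^2/2 + x^3/6 + x^4/24 + x^5/120 + x^6/720))
        + (Real.exp (-x) - (1 + (-x) + (-x)^2/2 + (-x)^3/6 + (-x)^4/24 + (-x)^5/120 + (-x)^6/720)))/2 := by
    rw [Real.cosh_eq]; ring
  rw [hc]
  have := abs_add_le (Real.exp x - (1 + x + x^2/2 + x^3/6 + x^4/24 + x^5/120 + x^6/720))
    (Real.exp (-x) - (1 + (-x) + (-x)^2/2 + (-x)^3/6 + (-x)^4/24 + (-x)^5/120 + (-x)^6/720))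
  rw [abs_div, abs_two]
  linarith [this, h1, h2]

lemma sinh_taylor (x : ℝ) (hx : |x| ≤ 1) :
    |Real.sinh x - (x + x^3/6 + x^5/120)| ≤ |x|^7 / 4410 := by
  have h1 := Real.exp_bound hx (by norm_num : 0 < 7)
  have h2 := Real.exp_bound (x := -x) (by rwa [abs_neg]) (by norm_num : 0 < 7)
  rw [exp_trunc7] at h1 h2
  rw [abs_neg] at h2
  have hfac : ((Nat.succ 7 : ℕ) : ℝ) / ((Nat.factorial 7 : ℕ) * (7:ℕ)) = 1/4410 := by
    norm_num [Nat.factorial]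
  rw [hfac] at h1 h2
  have hc : Real.sinh x - (x + x^3/6 + x^5/120)
      = ((Real.exp x - (1 + x + x^2/2 + x^3/6 + x^4/24 + x^5/120 + x^6/720))
        - (Real.exp (-x) - (1 + (-x) + (-x)^2/2 + (-x)^3/6 + (-x)^4/24 + (-x)^5/120 + (-x)^6/720)))/2 := by
    rw [Real.sinh_eq]; ring
  rw [hc]
  have := abs_sub (Real.exp x - (1 + x + x^2/2 + x^3/6 + x^4/24 + x^5/120 + x^6/720))
    (Real.exp (-x) - (1 + (-x) + (-x)^2/2 + (-x)^3/6 + (-x)^4/24 + (-x)^5/120 + (-x)^6/720))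
  rw [abs_div, abs_two]
  linarith [this, h1, h2]

set_option maxHeartbeats 2000000 in
/-- with the optimal choice `α = 1 − 1/√5`, the Boussinesq
squared phase velocity `f(x) = (1 − (α²/2 − α + 1/3)x²)/(1 − α(α/2 − 1)x²)`
matches `tanh(x)/x` up to `O(x⁶)` as `x → 0`. -/
theorem optimal_alpha_dispersion_match (α : ℝ) (hα : α = 1 - 1 / Real.sqrt 5)
    (f : ℝ → ℝ)
    (hf : ∀ x : ℝ,
      f x = (1 - (α^2 / 2 - α + 1/3) * x^2) / (1 - α * (α / 2 - 1) * x^2)) :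
    ∃ C > (0 : ℝ), ∃ r > (0 : ℝ), ∀ x : ℝ, 0 < |x| → |x| < r →
      |f x - Real.tanh x / x| ≤ C * |x|^6 := by
  have h5 : Real.sqrt 5 ^ 2 = 5 := Real.sq_sqrt (by norm_num)
  have h5pos : (0:ℝ) < Real.sqrt 5 := Real.sqrt_pos.mpr (by norm_num)
  have ha : α^2 / 2 - α + 1/3 = -(1/15) := by
    rw [hα]; field_simp; nlinarith [h5, h5pos]
  have hb : α * (α / 2 - 1) = -(2/5) := by
    rw [hα]; field_simp; nlinarith [h5, h5pos]
  refine ⟨1, one_pos, 1, one_pos, fun x hx0 hx1 => ?_⟩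
  have hxne : x ≠ 0 := fun h => by simp [h] at hx0
  have hxle : |x| ≤ 1 := le_of_lt hx1
  have hcosh : (0:ℝ) < Real.cosh x := Real.cosh_pos x
  have hone : (0:ℝ) < 1 + 2 * x^2 / 5 := by positivity
  -- rewrite f
  have hfx : f x = (1 + x^2/15) / (1 + 2 * x^2 / 5) := by
    rw [hf x, ha, hb]; ring_nf
  -- key algebraic identity
  have hkey : f x - Real.tanh x / x
      = (x * (1 + x^2/15) * Real.cosh x - (1 + 2 * x^2 / 5) * Real.sinh x)
        / (x * (1 + 2 * x^2 / 5) * Real.cosh x) := by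
    rw [hfx, Real.tanh_eq_sinh_div_cosh]
    field_simp
  obtain ⟨F, hF⟩ : ∃ F : ℝ, F = x * (1 + x^2/15) * Real.cosh x
      - (1 + 2 * x^2 / 5) * Real.sinh x := ⟨_, rfl⟩
  rw [← hF] at hkey
  rw [hkey]
  -- bound numerator
  have hFsplit : F = (x + x^3/15) * (Real.cosh x - (1 + x^2/2 + x^4/24 + x^6/720))
      - (1 + 2 * x^2 / 5) * (Real.sinh x - (x + x^3/6 + x^5/120))
      + (x^7/1200 + x^9/10800) := by
    rw [hF]; ring
  have hEc := cosh_taylor x hxle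
  have hEs := sinh_taylor x hxle
  have hx2 : x^2 ≤ 1 := by nlinarith [abs_nonneg x, sq_abs x]
  have hA : |x + x^3/15| ≤ 2 := by
    have : |x + x^3/15| ≤ |x| + |x|^3/15 := by
      calc |x + x^3/15| ≤ |x| + |x^3/15| := abs_add_le _ _
      _ = |x| + |x|^3/15 := by rw [abs_div, abs_pow]; norm_num
    nlinarith [abs_nonneg x, pow_le_one₀ (abs_nonneg x) hxle (n:=3)]
  have hB : |1 + 2 * x^2 / 5| ≤ 2 := by
    rw [abs_of_pos hone]; nlinarith
  have hP : |x^7/1200 + x^9/10800| ≤ |x|^7 / 500 := by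
    have h7 : |x^7/1200| = |x|^7/1200 := by rw [abs_div, abs_pow]; norm_num
    have h9 : |x^9/10800| = |x|^9/10800 := by rw [abs_div, abs_pow]; norm_num
    have h97 : |x|^9 ≤ |x|^7 := by
      have := pow_le_pow_of_le_one (abs_nonneg x) hxle (by norm_num : 7 ≤ 9)
      linarith
    calc |x^7/1200 + x^9/10800| ≤ |x^7/1200| + |x^9/10800| := abs_add_le _ _
      _ = |x|^7/1200 + |x|^9/10800 := by rw [h7, h9]
      _ ≤ |x|^7 / 500 := by linarith [h97, pow_nonneg (abs_nonneg x) 7]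
  have hFbound : |F| ≤ |x|^7 := by
    have habs : |F| ≤ |x + x^3/15| * |Real.cosh x - (1 + x^2/2 + x^4/24 + x^6/720)|
        + |1 + 2 * x^2 / 5| * |Real.sinh x - (x + x^3/6 + x^5/120)|
        + |x^7/1200 + x^9/10800| := by
      obtain ⟨A, hAdef⟩ : ∃ A : ℝ, A = (x + x^3/15) * (Real.cosh x - (1 + x^2/2 + x^4/24 + x^6/720)) := ⟨_, rfl⟩
      obtain ⟨B, hBdef⟩ : ∃ B : ℝ, B = (1 + 2 * x^2 / 5) * (Real.sinh x - (x + x^3/6 + x^5/120)) := ⟨_, rfl⟩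
      rw [hFsplit, ← hAdef, ← hBdef]
      have s1 : |A - B + (x^7/1200 + x^9/10800)| ≤ |A - B| + |x^7/1200 + x^9/10800| :=
        abs_add_le _ _
      have s2 : |A - B| ≤ |A| + |B| := abs_sub _ _
      have s3 : |A| = |x + x^3/15| * |Real.cosh x - (1 + x^2/2 + x^4/24 + x^6/720)| := by
        rw [hAdef, abs_mul]
      have s4 : |B| = |1 + 2 * x^2 / 5| * |Real.sinh x - (x + x^3/6 + x^5/120)| := by
        rw [hBdef, abs_mul]
      linarith [s1, s2, s3.le, s3.ge, s4.le, s4.ge]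
    have h7nn : (0:ℝ) ≤ |x|^7 := pow_nonneg (abs_nonneg x) 7
    have e1 : |x + x^3/15| * |Real.cosh x - (1 + x^2/2 + x^4/24 + x^6/720)|
        ≤ 2 * (|x|^7/4410) := by
      apply mul_le_mul hA hEc (abs_nonneg _) (by norm_num)
    have e2 : |1 + 2 * x^2 / 5| * |Real.sinh x - (x + x^3/6 + x^5/120)|
        ≤ 2 * (|x|^7/4410) := by
      apply mul_le_mul hB hEs (abs_nonneg _) (by norm_num)
    linarith [habs, e1, e2, hP, h7nn]
  -- denominator bound
  have hdpos : (0:ℝ) < |x * (1 + 2 * x^2 / 5) * Real.cosh x| := by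
    rw [abs_pos]; positivity
  have hdge : |x| ≤ |x * (1 + 2 * x^2 / 5) * Real.cosh x| := by
    rw [abs_mul, abs_mul, abs_of_pos hone, abs_of_pos hcosh]
    have h1 : (1:ℝ) ≤ (1 + 2 * x^2 / 5) * Real.cosh x := by
      nlinarith [Real.one_le_cosh x, sq_nonneg x]
    calc |x| = |x| * 1 := (mul_one _).symm
      _ ≤ |x| * ((1 + 2 * x^2 / 5) * Real.cosh x) :=
          mul_le_mul_of_nonneg_left h1 (abs_nonneg x)
      _ = |x| * (1 + 2 * x^2 / 5) * Real.cosh x := by ring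
  rw [abs_div]
  calc |F| / |x * (1 + 2 * x^2 / 5) * Real.cosh x|
      ≤ |x|^7 / |x| := div_le_div₀ (pow_nonneg (abs_nonneg x) 7) hFbound hx0 hdge
    _ = |x|^6 := by
        rw [pow_succ]
        field_simp
    _ ≤ 1 * |x|^6 := by rw [one_mul]
end
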